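/- The number of Dyck paths of size n+1 avoiding the factor UDU equals the number of Dyck paths of size n avoiding the factor UUU. -/

import Mathlib

/-!
Both sides are Motzkin numbers. Decompose a nonempty Dyck word at its first return as `U x D y`.
It avoids `UDU` iff `x` and `y` do and `y` is empty whenever `x` is; so the nonempty `UDU`-free
words are `UD`, `U x D` and `U x D y` with `x`, `y` nonempty and `UDU`-free. It avoids `UUU` iff
`x` and `y` do and `x` does not begin with `UU`; so the `UUU`-free words are `ε`, `UD y` and
`UUD x D y` with `x`, `y` `UUU`-free. Both are the grammar of unary–binary trees, and the
semilength is the number of edges plus one, resp. the number of edges.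
-/

/-- A Dyck path of size `n`, encoded as a list of booleans (`true` = up-step `U`,
`false` = down-step `D`): length `2n`, `n` up-steps, and every prefix has at least
as many `U`'s as `D`'s. -/
def IsDyckPath (n : ℕ) (l : List Bool) : Prop :=
  l.length = 2 * n ∧ l.count true = n ∧
  ∀ p : List Bool, p <+: l → p.count false ≤ p.count true

theorem List.triple_infix_append_iff {α : Type*} {a b c : α} {xs ys : List α} :
    [a, b, c] <:+: xs ++ ys ↔ [a, b, c] <:+: xs ∨ [a, b, c] <:+: ys ∨
      ([a] <:+ xs ∧ [b, c] <+: ys) ∨ ([a, b] <:+ xs ∧ [c] <+: ys) := by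
  rw [infix_append_iff_ne_nil]
  simp only [cons_eq_append_iff]
  aesop

namespace DyckWord

open DyckStep

variable {p q : DyckWord}

@[simp] lemma toList_zero : (0 : DyckWord).toList = [] := rfl

lemma toList_add (p q : DyckWord) : (p + q).toList = p.toList ++ q.toList := rfl

lemma toList_nest (p : DyckWord) : p.nest.toList = U :: (p.toList ++ [D]) := rfl

lemma eq_zero_or_eq_nest_add (p : DyckWord) : p = 0 ∨ ∃ x y : DyckWord, p = x.nest + y := by
  rcases eq_or_ne p 0 with hp | hp
  · exact .inl hp
  · exact .inr ⟨_, _, (nest_insidePart_add_outsidePart hp).symm⟩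

lemma head?_toList (h : p ≠ 0) : p.toList.head? = some U := by
  rw [List.head?_eq_some_head (toList_ne_nil.2 h), head_eq_U]

lemma getLast?_toList (h : p ≠ 0) : p.toList.getLast? = some D := by
  rw [List.getLast?_eq_some_getLast (toList_ne_nil.2 h), getLast_eq_D]

lemma U_prefix_toList_iff : [U] <+: p.toList ↔ p ≠ 0 := by
  rw [List.singleton_prefix_iff_head?_eq_some]
  exact ⟨fun h hp ↦ by simp [hp] at h, head?_toList⟩

lemma not_U_suffix_toList : ¬ [U] <:+ p.toList := by
  rw [List.singleton_suffix_iff_getLast?_eq_some]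
  rcases eq_or_ne p 0 with rfl | hp
  · simp
  · simp [getLast?_toList hp]

lemma infix_UDU_nest_add : [U, D, U] <:+: (p.nest + q).toList ↔
    [U, D, U] <:+: p.toList ∨ [U, D, U] <:+: q.toList ∨ (p = 0 ∧ q ≠ 0) := by
  rw [toList_add, toList_nest, List.cons_append, List.infix_cons_iff, List.append_assoc,
    List.singleton_append, List.triple_infix_append_iff, List.infix_cons_iff]
  obtain rfl | ⟨x, y, rfl⟩ := eq_zero_or_eq_nest_add p
  · simp [U_prefix_toList_iff, or_comm]
  · simp only [not_U_suffix_toList, false_and]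
    simp [toList_add, toList_nest]

lemma infix_UUU_nest_add : [U, U, U] <:+: (p.nest + q).toList ↔
    [U, U, U] <:+: p.toList ∨ [U, U, U] <:+: q.toList ∨ p.insidePart ≠ 0 := by
  rw [toList_add, toList_nest, List.cons_append, List.infix_cons_iff, List.append_assoc,
    List.singleton_append, List.triple_infix_append_iff, List.infix_cons_iff]
  obtain rfl | ⟨x, y, rfl⟩ := eq_zero_or_eq_nest_add p
  · simp
  · obtain rfl | ⟨a, b, rfl⟩ := eq_zero_or_eq_nest_add x <;> simp [toList_add, toList_nest]

end DyckWord

inductive MotzkinTree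
  | leaf
  | unary (t : MotzkinTree)
  | binary (l r : MotzkinTree)

namespace MotzkinTree

open DyckStep DyckWord

def numEdges : MotzkinTree → ℕ
  | leaf => 0
  | unary t => t.numEdges + 1
  | binary l r => l.numEdges + r.numEdges + 2

def toUDUFree : MotzkinTree → DyckWord
  | leaf => nest 0
  | unary t => t.toUDUFree.nest
  | binary l r => l.toUDUFree.nest + r.toUDUFree

def toUUUFree : MotzkinTree → DyckWord
  | leaf => 0
  | unary t => nest 0 + t.toUUUFree
  | binary l r => (nest 0 + l.toUUUFree).nest + r.toUUUFree

lemma semilength_toUDUFree (t : MotzkinTree) : t.toUDUFree.semilength = t.numEdges + 1 := by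
  induction t <;> simp [toUDUFree, numEdges, *]
  omega

lemma semilength_toUUUFree (t : MotzkinTree) : t.toUUUFree.semilength = t.numEdges := by
  induction t <;> simp [toUUUFree, numEdges, *] <;> omega

lemma toUDUFree_ne_zero (t : MotzkinTree) : t.toUDUFree ≠ 0 := by
  cases t <;> simp [toUDUFree]

lemma not_infix_toUDUFree (t : MotzkinTree) : ¬ [U, D, U] <:+: t.toUDUFree.toList := by
  induction t with
  | leaf => decide
  | unary t ih => simpa [toUDUFree, ih] using infix_UDU_nest_add (p := t.toUDUFree) (q := 0)
  | binary l r ihl ihr => simp [toUDUFree, infix_UDU_nest_add, ihl, ihr, toUDUFree_ne_zero]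

lemma not_infix_toUUUFree (t : MotzkinTree) : ¬ [U, U, U] <:+: t.toUUUFree.toList := by
  induction t <;> simp [toUUUFree, infix_UUU_nest_add, *]

/- In both injectivity proofs, `insidePart` and `outsidePart` of an encoding read off the kind of
the root and the encodings of its subtrees. -/

lemma toUDUFree_injective : Function.Injective toUDUFree := by
  intro s t h
  induction s generalizing t <;> cases t <;>
    have h₁ := congrArg insidePart h <;> have h₂ := congrArg outsidePart h <;>
    simp [toUDUFree, toUDUFree_ne_zero, eq_comm (a := (0 : DyckWord))] at h₁ h₂ ⊢ <;>
    aesop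

lemma toUUUFree_injective : Function.Injective toUUUFree := by
  intro s t h
  induction s generalizing t <;> cases t <;>
    have h₁ := congrArg insidePart h <;> have h₂ := congrArg outsidePart h <;>
    simp [toUUUFree, eq_comm (a := (0 : DyckWord))] at h h₁ h₂ ⊢ <;>
    aesop

theorem exists_toUDUFree_eq (p : DyckWord) (hp : p ≠ 0) (h : ¬ [U, D, U] <:+: p.toList) :
    ∃ t : MotzkinTree, t.toUDUFree = p := by
  obtain ⟨x, y, rfl⟩ := (eq_zero_or_eq_nest_add p).resolve_left hp
  rw [infix_UDU_nest_add] at h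
  push Not at h
  obtain ⟨hx, hy, hxy⟩ := h
  rcases eq_or_ne x 0 with rfl | hx0
  · obtain rfl := hxy rfl
    exact ⟨leaf, rfl⟩
  obtain ⟨s, rfl⟩ := exists_toUDUFree_eq x hx0 hx
  rcases eq_or_ne y 0 with rfl | hy0
  · exact ⟨unary s, (add_zero _).symm⟩
  obtain ⟨t, rfl⟩ := exists_toUDUFree_eq y hy0 hy
  exact ⟨binary s t, rfl⟩
termination_by p.semilength

theorem exists_toUUUFree_eq (p : DyckWord) (h : ¬ [U, U, U] <:+: p.toList) :
    ∃ t : MotzkinTree, t.toUUUFree = p := by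
  obtain rfl | ⟨x, y, rfl⟩ := eq_zero_or_eq_nest_add p
  · exact ⟨leaf, rfl⟩
  rw [infix_UUU_nest_add] at h
  push Not at h
  obtain ⟨hx, hy, hx0⟩ := h
  obtain ⟨t, rfl⟩ := exists_toUUUFree_eq y hy
  obtain rfl | ⟨a, b, rfl⟩ := eq_zero_or_eq_nest_add x
  · exact ⟨unary t, rfl⟩
  obtain rfl : a = 0 := by simpa using hx0
  obtain ⟨s, rfl⟩ := exists_toUUUFree_eq b (by simpa [infix_UUU_nest_add] using hx)
  exact ⟨binary s t, rfl⟩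
termination_by p.semilength

theorem image_toUDUFree (n : ℕ) : toUDUFree '' {t | t.numEdges = n} =
    {p : DyckWord | p.semilength = n + 1 ∧ ¬ [U, D, U] <:+: p.toList} := by
  ext p
  constructor
  · rintro ⟨t, rfl, rfl⟩
    exact ⟨semilength_toUDUFree t, not_infix_toUDUFree t⟩
  · rintro ⟨hp, h⟩
    obtain ⟨t, rfl⟩ := exists_toUDUFree_eq p (by rintro rfl; simp at hp) h
    exact ⟨t, by simpa [semilength_toUDUFree] using hp, rfl⟩

theorem image_toUUUFree (n : ℕ) : toUUUFree '' {t | t.numEdges = n} =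
    {p : DyckWord | p.semilength = n ∧ ¬ [U, U, U] <:+: p.toList} := by
  ext p
  constructor
  · rintro ⟨t, rfl, rfl⟩
    exact ⟨semilength_toUUUFree t, not_infix_toUUUFree t⟩
  · rintro ⟨rfl, h⟩
    obtain ⟨t, rfl⟩ := exists_toUUUFree_eq p h
    exact ⟨t, (semilength_toUUUFree t).symm, rfl⟩

end MotzkinTree

namespace DyckStep

def equivBool : DyckStep ≃ Bool where
  toFun s := s = U
  invFun b := if b then U else D
  left_inv s := by cases s <;> rfl
  right_inv b := by cases b <;> rfl

end DyckStep

section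

open DyckStep

theorem isDyckPath_iff {n : ℕ} {l : List Bool} :
    IsDyckPath n l ↔ ∃ p : DyckWord, p.semilength = n ∧ p.toList.map equivBool = l := by
  constructor
  · rintro ⟨hlen, htrue, hpre⟩
    have hcount (r : List Bool) (b : Bool) :
        (r.map equivBool.symm).count (equivBool.symm b) = r.count b :=
      List.count_map_of_injective _ _ equivBool.symm.injective _
    have hfalse : l.count false = n := by
      have := List.count_true_add_count_false l
      omega
    refine ⟨⟨l.map equivBool.symm, ?_, fun i ↦ ?_⟩, hcount l true ▸ htrue, by simp⟩
    · exact (hcount l true).trans (htrue.trans (hcount l false ▸ hfalse).symm)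
    · rw [← List.map_take]
      exact (hcount _ false).trans_le
        ((hpre _ (List.take_prefix _ _)).trans_eq (hcount _ true).symm)
  · rintro ⟨p, rfl, rfl⟩
    have hcount (r : List DyckStep) (s : DyckStep) :
        (r.map equivBool).count (equivBool s) = r.count s :=
      List.count_map_of_injective _ _ equivBool.injective _
    refine ⟨by rw [List.length_map, p.two_mul_semilength_eq_length], hcount _ U, fun q hq ↦ ?_⟩
    obtain ⟨r, hr, rfl⟩ := List.prefix_map_iff.1 hq
    rw [List.prefix_iff_eq_take.1 hr]
    exact (hcount _ D).trans_le ((p.count_D_le_count_U _).trans_eq (hcount _ U).symm)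

theorem ncard_setOf_isDyckPath_not_infix (n : ℕ) (w : List DyckStep) :
    {l : List Bool | IsDyckPath n l ∧ ¬ w.map equivBool <:+: l}.ncard =
      {p : DyckWord | p.semilength = n ∧ ¬ w <:+: p.toList}.ncard := by
  have hinj : Function.Injective fun p : DyckWord ↦ p.toList.map equivBool :=
    fun p q h ↦ DyckWord.ext (List.map_injective_iff.2 equivBool.injective h)
  have hinfix (p : DyckWord) : w.map equivBool <:+: p.toList.map equivBool ↔ w <:+: p.toList :=
    ⟨fun h ↦ by simpa using h.map equivBool.symm, fun h ↦ h.map _⟩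
  rw [← Set.ncard_image_of_injective _ hinj]
  congr 1
  ext l
  simp only [Set.mem_image, isDyckPath_iff]
  constructor
  · rintro ⟨⟨p, hp, rfl⟩, hw⟩
    exact ⟨p, ⟨hp, (hinfix p).not.1 hw⟩, rfl⟩
  · rintro ⟨p, ⟨hp, hw⟩, rfl⟩
    exact ⟨⟨p, hp, rfl⟩, (hinfix p).not.2 hw⟩

end

theorem stmt12 (n : ℕ) :
    Set.ncard {l : List Bool | IsDyckPath (n + 1) l ∧ ¬ ([true, false, true] <:+: l)}
      = Set.ncard {l : List Bool | IsDyckPath n l ∧ ¬ ([true, true, true] <:+: l)} := by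
  calc _ = {p : DyckWord | p.semilength = n + 1 ∧ ¬ [.U, .D, .U] <:+: p.toList}.ncard :=
        ncard_setOf_isDyckPath_not_infix (n + 1) [.U, .D, .U]
    _ = {t : MotzkinTree | t.numEdges = n}.ncard := by
        rw [← MotzkinTree.image_toUDUFree,
          Set.ncard_image_of_injective _ MotzkinTree.toUDUFree_injective]
    _ = {p : DyckWord | p.semilength = n ∧ ¬ [.U, .U, .U] <:+: p.toList}.ncard := by
        rw [← MotzkinTree.image_toUUUFree,
          Set.ncard_image_of_injective _ MotzkinTree.toUUUFree_injective]
    _ = _ := (ncard_setOf_isDyckPath_not_infix n [.U, .U, .U]).symm
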